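/- Let A = ⊕_{k≥0} A_k be a finitely generated commutative graded algebra over A₀, and let θ(y) = y + ∑_{k≥0} a_k y^{−k} ∈ A⟦y^{−1}⟧[y] be a formal Laurent series with a_k ∈ A_{k+1} for every k ≥ 0. Then η(w) := w·exp(−∑_{k≥1} (1/k)·([y^0] θ^k)·w^{−k}) is a well-defined element of A⟦w^{−1}⟧[w] of the form η(w) = w + ∑_{k≥0} b_k w^{−k}, and it is a compositional inverse of θ, i.e. θ(η(w)) = w. -/

import Mathlib

/-!
Write `θ(y) = y · f(1/y)` with `f(t) = 1 + ∑_{k≥0} a_k t^{k+1}` and put `s = 1/w`,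
`ψ = 1/η`. Then `θ(η(w)) = w` is the Lagrange inversion equation `ψ = s · f(ψ)`, solved by
the compositional inverse of `s / f(s)`. The Lagrange–Bürmann formula
`n [sⁿ] H(ψ) = [tⁿ⁻¹] H'(t) f(t)ⁿ` for `H = log f` gives
`log f(ψ) = ∑_{n≥1} (1/n) [tⁿ] fⁿ · sⁿ = ∑_{n≥1} (1/n) [y⁰] θⁿ · sⁿ`, so
`η = w / f(ψ) = w · exp(−∑_{n≥1} (1/n) [y⁰] θⁿ · w⁻ⁿ)`.
-/

/-- The coefficients of the series
`η(w) = w·exp(−∑_{k≥1} (1/k)·([y^0] θ^k)·w^{−k})`, in the mirrored encoding where a formal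
Laurent series in `w^{−1}` with finitely many positive powers of `w` is a `HahnSeries ℤ A`
in the variable `s = w^{−1}` (so index `m` records the coefficient of `w^{−m}`).  Here `θ`
is encoded by `Θ` with `Θ.coeff k = a_k = [y^{-k}]θ`, so `[y^0]θ^k = (Θ^k).coeff 0`; the
exponential `exp(G) = ∑_j G^j/j!` of the power series
`G = −∑_{k≥1} (1/k)·([y^0]θ^k)·s^k` (zero constant term) is computed coefficientwise with
the valid truncation `j ≤ n`, and `η` is its shift by `s^{−1}`. -/
noncomputable def etaCoeff {A : Type*} [CommRing A] [Algebra ℚ A]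
    (Θ : HahnSeries ℤ A) (m : ℤ) : A :=
  if 0 ≤ m + 1 then
    ∑ j ∈ Finset.range ((m + 1).toNat + 1),
      (j.factorial : ℚ)⁻¹ •
        PowerSeries.coeff (R := A) (m + 1).toNat
          ((-(PowerSeries.mk fun k =>
            if k = 0 then 0 else (k : ℚ)⁻¹ • (Θ ^ k).coeff 0)) ^ j)
  else 0

open PowerSeries Finset

namespace PowerSeries

section CommSemiring

variable {A : Type*} [CommSemiring A]

lemma coeff_pow_eq_zero_of_lt {φ : A⟦X⟧} (hφ : constantCoeff φ = 0) {n j : ℕ} (h : n < j) :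
    coeff n (φ ^ j) = 0 :=
  X_pow_dvd_iff.1 (pow_dvd_pow_of_dvd (X_dvd_iff.2 hφ) j) n h

lemma natCast_mul_derivative_pow_mul_pow (f : A⟦X⟧) (k m : ℕ) :
    ((k + m : ℕ) : A⟦X⟧) * (d⁄dX A (f ^ k) * f ^ m) = k * d⁄dX A (f ^ (k + m)) := by
  rcases k with _ | k
  · simp
  · rw [derivative_pow, derivative_pow, show k + 1 + m - 1 = k + m by omega, Nat.add_sub_cancel,
      pow_add f k m]
    ring

lemma coeff_natCast_mul (k n : ℕ) (φ : A⟦X⟧) : coeff n ((k : A⟦X⟧) * φ) = k * coeff n φ := by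
  rw [← map_natCast (C (R := A)), coeff_C_mul]

lemma natCast_mul_sum_range_mul_coeff_pow (f : A⟦X⟧) (k m : ℕ) :
    ((k + m : ℕ) : A) * ∑ j ∈ range (m + 1), (j : A) * (coeff j (f ^ k) * coeff (m - j) (f ^ m))
      = k * (m * coeff m (f ^ (k + m))) := by
  rcases m with _ | m
  · simp
  have hsum : ∑ j ∈ range (m + 2), (j : A) * (coeff j (f ^ k) * coeff (m + 1 - j) (f ^ (m + 1)))
      = coeff m (d⁄dX A (f ^ k) * f ^ (m + 1)) := by
    rw [coeff_mul, Nat.sum_antidiagonal_eq_sum_range_succ_mk, sum_range_succ' _ (m + 1)]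
    simp only [Nat.cast_zero, zero_mul, add_zero, coeff_derivative]
    refine sum_congr rfl fun i hi => ?_
    rw [show m + 1 - (i + 1) = m - i by omega]
    push_cast
    ring
  have := congrArg (coeff m) (natCast_mul_derivative_pow_mul_pow f k (m + 1))
  rw [coeff_natCast_mul, coeff_natCast_mul, coeff_derivative] at this
  rw [hsum, this]
  push_cast
  ring

end CommSemiring

variable {A : Type*} [CommRing A]

lemma coeff_subst_eq_sum_range {ψ : A⟦X⟧} (hψ : constantCoeff ψ = 0) (f : A⟦X⟧) (n : ℕ) :
    coeff n (f.subst ψ) = ∑ j ∈ range (n + 1), coeff j f * coeff n (ψ ^ j) := by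
  rw [coeff_subst' (.of_constantCoeff_zero' hψ)]
  refine finsum_eq_sum_of_support_subset _ fun j hj => mem_range.2 (lt_of_not_ge fun hnj => hj ?_)
  beta_reduce
  rw [coeff_pow_eq_zero_of_lt hψ (Nat.lt_of_succ_le hnj), smul_zero]

lemma constantCoeff_subst_of_constantCoeff_eq_zero {ψ : A⟦X⟧} (hψ : constantCoeff ψ = 0)
    (f : A⟦X⟧) : constantCoeff (f.subst ψ) = constantCoeff f := by
  simpa using coeff_subst_eq_sum_range hψ f 0

section LagrangeInversion

variable {f ψ : A⟦X⟧}

lemma constantCoeff_eq_zero_of_eq_X_mul_subst (hψ : ψ = X * f.subst ψ) : constantCoeff ψ = 0 := by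
  rw [hψ, map_mul, constantCoeff_X, zero_mul]

/-- `ψ` is the compositional inverse of `X / f`. -/
theorem exists_eq_X_mul_subst (hf : IsUnit (constantCoeff f)) : ∃ ψ : A⟦X⟧, ψ = X * f.subst ψ := by
  obtain ⟨u, rfl⟩ := isUnit_iff_constantCoeff.2 hf
  set v : A⟦X⟧ := ↑u⁻¹
  have hP : constantCoeff (X * v) = 0 := by simp
  have hP' : IsUnit (coeff 1 (X * v)) := by
    simpa [coeff_succ_X_mul] using (Units.map (constantCoeff (R := A)).toMonoidHom u⁻¹).isUnit
  set ψ := substInvOfIsUnit _ hP'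
  have hψ : HasSubst ψ := HasSubst.substInvOfIsUnit _ hP'
  refine ⟨ψ, ?_⟩
  have hinv := subst_substInvOfIsUnit_right _ hP hP'
  have hunit : (u : A⟦X⟧).subst ψ * v.subst ψ = 1 := by
    rw [← subst_mul hψ, Units.mul_inv, ← coe_substAlgHom hψ, map_one]
  rw [subst_mul hψ, subst_X hψ] at hinv
  linear_combination (u : A⟦X⟧).subst ψ * hinv - ψ * hunit

lemma coeff_add_pow_eq_sum_of_eq_X_mul_subst (hψ : ψ = X * f.subst ψ) (k m : ℕ) :
    coeff (k + m) (ψ ^ k) = ∑ j ∈ range (m + 1), coeff j (f ^ k) * coeff m (ψ ^ j) := by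
  have hψ0 := constantCoeff_eq_zero_of_eq_X_mul_subst hψ
  conv_lhs => rw [hψ, mul_pow, ← subst_pow (.of_constantCoeff_zero' hψ0), add_comm,
    coeff_X_pow_mul]
  exact coeff_subst_eq_sum_range hψ0 _ _

/-- The Lagrange–Bürmann formula for `H = Xᵏ`. -/
theorem natCast_mul_coeff_pow_of_eq_X_mul_subst [IsAddTorsionFree A] (hψ : ψ = X * f.subst ψ)
    (k m : ℕ) : ((k + m : ℕ) : A) * coeff (k + m) (ψ ^ k) = k * coeff m (f ^ (k + m)) := by
  induction hn : k + m using Nat.strong_induction_on generalizing k m with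
  | _ n ih =>
  subst hn
  rcases Nat.eq_zero_or_pos k with rfl | hk
  · rcases m with _ | m <;> simp [coeff_one]
  rcases Nat.eq_zero_or_pos m with rfl | hm
  · simpa using congrArg ((k : A) * ·) (coeff_add_pow_eq_sum_of_eq_X_mul_subst hψ k 0)
  have hstep : (m : A) * coeff (k + m) (ψ ^ k)
      = ∑ j ∈ range (m + 1), (j : A) * (coeff j (f ^ k) * coeff (m - j) (f ^ m)) := by
    rw [coeff_add_pow_eq_sum_of_eq_X_mul_subst hψ, mul_sum]
    refine sum_congr rfl fun j hj => ?_
    have hjm : j ≤ m := Nat.lt_succ_iff.1 (mem_range.1 hj)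
    have := ih m (by omega) j (m - j) (Nat.add_sub_cancel' hjm)
    rw [mul_left_comm, this]
    ring
  have key := natCast_mul_sum_range_mul_coeff_pow f k m
  rw [← hstep] at key
  refine nsmul_right_injective hm.ne' ?_
  simp only [nsmul_eq_mul]
  linear_combination key

/-- The Lagrange–Bürmann formula. -/
theorem natCast_mul_coeff_subst_of_eq_X_mul_subst [IsAddTorsionFree A] (hψ : ψ = X * f.subst ψ)
    (H : A⟦X⟧) (n : ℕ) :
    ((n + 1 : ℕ) : A) * coeff (n + 1) (H.subst ψ) = coeff n (d⁄dX A H * f ^ (n + 1)) := by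
  rw [coeff_subst_eq_sum_range (constantCoeff_eq_zero_of_eq_X_mul_subst hψ), mul_sum,
    sum_range_succ', pow_zero, coeff_one, if_neg n.succ_ne_zero, mul_zero, mul_zero, add_zero,
    coeff_mul, Nat.sum_antidiagonal_eq_sum_range_succ_mk]
  refine sum_congr rfl fun i hi => ?_
  have hin : i ≤ n := Nat.lt_succ_iff.1 (mem_range.1 hi)
  have := natCast_mul_coeff_pow_of_eq_X_mul_subst hψ (i + 1) (n - i)
  rw [show i + 1 + (n - i) = n + 1 by omega] at this
  rw [coeff_derivative, mul_left_comm, this]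
  push_cast
  ring

end LagrangeInversion

section Exponential

variable [Algebra ℚ A] {f ψ : A⟦X⟧}

lemma one_add_X_mul_derivative_log : (1 + X) * d⁄dX A (log A) = 1 := by
  ext n
  rw [deriv_log, add_mul, one_mul, map_add]
  rcases n with _ | n
  · simp
  · rw [coeff_succ_X_mul, coeff_mk, coeff_mk, coeff_one, if_neg n.succ_ne_zero, pow_succ,
      map_mul]
    simp

lemma mul_derivative_logOf (hf : constantCoeff f = 1) : f * d⁄dX A (logOf f) = d⁄dX A f := by
  have hs : HasSubst (f - 1) := .of_constantCoeff_zero' (by simp [hf])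
  have hf' : (1 + X : A⟦X⟧).subst (f - 1) = f := by
    rw [← coe_substAlgHom hs, map_add, map_one, coe_substAlgHom, subst_X hs]
    ring
  calc f * d⁄dX A (logOf f)
      = ((1 + X) * d⁄dX A (log A)).subst (f - 1) * d⁄dX A f := by
        rw [logOf_eq, derivative_subst hs, subst_mul hs, hf', map_sub, derivative_one, sub_zero]
        ring
    _ = d⁄dX A f := by rw [one_add_X_mul_derivative_log, ← coe_substAlgHom hs, map_one, one_mul]

/-- `log f(ψ)` for the solution of `ψ = X · f(ψ)`, by `logOf_subst_eq_lagrangeLog`. -/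
noncomputable def lagrangeLog (f : A⟦X⟧) : A⟦X⟧ :=
  mk fun n => if n = 0 then 0 else (n : ℚ)⁻¹ • coeff n (f ^ n)

lemma constantCoeff_lagrangeLog (f : A⟦X⟧) : constantCoeff (lagrangeLog f) = 0 := by
  simp [lagrangeLog, ← coeff_zero_eq_constantCoeff_apply]

theorem logOf_subst_eq_lagrangeLog (hf : constantCoeff f = 1) (hψ : ψ = X * f.subst ψ) :
    (logOf f).subst ψ = lagrangeLog f := by
  have : IsAddTorsionFree A := .of_module_rat A
  have hψ0 := constantCoeff_eq_zero_of_eq_X_mul_subst hψ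
  ext n
  rcases n with _ | n
  · simp [lagrangeLog, constantCoeff_subst_of_constantCoeff_eq_zero hψ0, constantCoeff_logOf hf]
  rw [lagrangeLog, coeff_mk, if_neg n.succ_ne_zero, eq_inv_smul_iff₀ (by positivity),
    Nat.cast_smul_eq_nsmul, nsmul_eq_mul, natCast_mul_coeff_subst_of_eq_X_mul_subst hψ,
    show d⁄dX A (logOf f) * f ^ (n + 1) = f ^ n * d⁄dX A f by
      rw [← mul_derivative_logOf hf]; ring]
  refine nsmul_right_injective n.succ_ne_zero ?_
  have := coeff_derivative (f ^ (n + 1)) n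
  rw [derivative_pow, Nat.add_sub_cancel, mul_assoc, coeff_natCast_mul] at this
  simp only [nsmul_eq_mul, this]
  push_cast
  ring

lemma derivative_exp_subst {G : A⟦X⟧} (hG : constantCoeff G = 0) :
    d⁄dX A ((exp A).subst G) = (exp A).subst G * d⁄dX A G := by
  rw [derivative_subst (.of_constantCoeff_zero' hG), derivative_exp]

lemma coeff_exp_subst {G : A⟦X⟧} (hG : constantCoeff G = 0) (n : ℕ) :
    coeff n ((exp A).subst G) = ∑ j ∈ range (n + 1), (j.factorial : ℚ)⁻¹ • coeff n (G ^ j) := by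
  rw [coeff_subst_eq_sum_range hG]
  refine sum_congr rfl fun j _ => ?_
  rw [coeff_exp, Algebra.smul_def]
  simp

/-- `f(ψ) = exp (lagrangeLog f)`: both sides have logarithmic derivative `(lagrangeLog f)'`. -/
theorem exp_subst_neg_lagrangeLog_mul_subst (hf : constantCoeff f = 1) (hψ : ψ = X * f.subst ψ) :
    (exp A).subst (-lagrangeLog f) * f.subst ψ = 1 := by
  have : IsAddTorsionFree A := .of_module_rat A
  have hψ0 := constantCoeff_eq_zero_of_eq_X_mul_subst hψ
  have hs : HasSubst ψ := .of_constantCoeff_zero' hψ0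
  have hG : constantCoeff (-lagrangeLog f) = 0 := by simp [constantCoeff_lagrangeLog]
  have hP : d⁄dX A (f.subst ψ) = f.subst ψ * d⁄dX A (lagrangeLog f) := by
    rw [← logOf_subst_eq_lagrangeLog hf hψ, derivative_subst hs, derivative_subst hs,
      ← mul_derivative_logOf hf, subst_mul hs]
    ring
  refine derivative.ext ?_ ?_
  · rw [Derivation.leibniz, derivative_exp_subst hG, hP, map_neg, derivative_one, smul_eq_mul,
      smul_eq_mul]
    ring
  · simp [constantCoeff_subst_of_constantCoeff_eq_zero hψ0,
      constantCoeff_subst_of_constantCoeff_eq_zero hG, hf]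

theorem exp_subst_neg_lagrangeLog_add_X_mul_subst {g : A⟦X⟧}
    (hψ : ψ = X * (1 + X * g).subst ψ) :
    (exp A).subst (-lagrangeLog (1 + X * g)) + X * g.subst ψ = 1 := by
  have hs : HasSubst ψ := .of_constantCoeff_zero' (constantCoeff_eq_zero_of_eq_X_mul_subst hψ)
  have hEP := exp_subst_neg_lagrangeLog_mul_subst (by simp) hψ
  have hP : (1 + X * g).subst ψ = 1 + ψ * g.subst ψ := by
    rw [← coe_substAlgHom hs, map_add, map_one, map_mul, coe_substAlgHom, subst_X hs]
  rw [hP] at hψ hEP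
  linear_combination (1 - X * g.subst ψ) * hEP - (exp A).subst (-lagrangeLog (1 + X * g)) *
    g.subst ψ * hψ

end Exponential

end PowerSeries

namespace HahnSeries

variable {R : Type*}

lemma coeff_ofPowerSeries_int [Semiring R] (x : PowerSeries R) (m : ℤ) :
    (ofPowerSeries ℤ R x).coeff m = if 0 ≤ m then PowerSeries.coeff m.toNat x else 0 := by
  split_ifs with hm
  · rw [← ofPowerSeries_apply_coeff (Γ := ℤ) x m.toNat, Int.toNat_of_nonneg hm]
  · rw [ofPowerSeries_apply]
    exact embDomain_of_notMem_range fun ⟨n, hn⟩ => hm (hn ▸ n.cast_nonneg)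

lemma eq_single_neg_one_mul_ofPowerSeries [Semiring R] {Θ : HahnSeries ℤ R}
    (hlow : ∀ j < (-1 : ℤ), Θ.coeff j = 0) (h1 : Θ.coeff (-1) = 1) :
    Θ = single (-1) 1 * ofPowerSeries ℤ R (1 + X * PowerSeries.mk fun k => Θ.coeff k) := by
  ext m
  rw [coeff_single_mul, one_mul, coeff_ofPowerSeries_int, sub_neg_eq_add]
  split_ifs with hm
  · obtain ⟨n, hn⟩ := Int.eq_ofNat_of_zero_le hm
    rcases n with _ | n
    · rw [show m = -1 by omega, h1]
      simp
    · rw [show (m + 1).toNat = n + 1 by omega, map_add, coeff_succ_X_mul, PowerSeries.coeff_one,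
        if_neg n.succ_ne_zero, PowerSeries.coeff_mk, zero_add]
      congr
      omega
  · exact hlow m (by omega)

lemma coeff_zero_pow_single_neg_one_mul_ofPowerSeries [CommSemiring R] (f : PowerSeries R) (k : ℕ) :
    ((single (-1 : ℤ) (1 : R) * ofPowerSeries ℤ R f) ^ k).coeff 0 = PowerSeries.coeff k (f ^ k) := by
  rw [mul_pow, single_pow, one_pow, ← map_pow, coeff_single_mul, one_mul,
    coeff_ofPowerSeries_int]
  simp

variable [CommRing R]

lemma sum_Icc_mul_coeff_ofPowerSeries_pow (a : ℤ → R) {ψ : PowerSeries R}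
    (hψ : PowerSeries.constantCoeff ψ = 0) (n : ℕ) :
    ∑ k ∈ Icc (0 : ℤ) n, a k * ((ofPowerSeries ℤ R ψ) ^ k.toNat).coeff n
      = PowerSeries.coeff n ((PowerSeries.mk fun k : ℕ => a k).subst ψ) := by
  rw [PowerSeries.coeff_subst_eq_sum_range hψ, Int.Icc_eq_finset_map, sum_map]
  refine sum_congr (by simp) fun k _ => ?_
  simp [← map_pow, coeff_ofPowerSeries_int]

theorem coeff_single_neg_one_mul_add_sum_Icc_eq_ite (a : ℤ → R) {E ψ : PowerSeries R}
    (hψ : PowerSeries.constantCoeff ψ = 0)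
    (h : E + X * (PowerSeries.mk fun k : ℕ => a k).subst ψ = 1) (m : ℤ) :
    (single (-1) 1 * ofPowerSeries ℤ R E).coeff m
      + ∑ k ∈ Icc (0 : ℤ) m, a k * ((ofPowerSeries ℤ R ψ) ^ k.toNat).coeff m
      = if m = -1 then 1 else 0 := by
  rw [coeff_single_mul, one_mul, coeff_ofPowerSeries_int, sub_neg_eq_add]
  rcases lt_or_ge m 0 with hm | hm
  · rw [Icc_eq_empty (by omega), sum_empty, add_zero]
    rcases eq_or_ne m (-1) with rfl | hm1
    · have := congrArg PowerSeries.constantCoeff h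
      simp only [map_add, map_mul, PowerSeries.constantCoeff_X, zero_mul, add_zero,
        map_one] at this
      simp [this]
    · rw [if_neg (by omega), if_neg hm1]
  · lift m to ℕ using hm
    rw [if_pos (by omega), if_neg (by omega), sum_Icc_mul_coeff_ofPowerSeries_pow a hψ,
      show ((m : ℤ) + 1).toNat = m + 1 by omega, ← PowerSeries.coeff_succ_X_mul m, ← map_add, h,
      PowerSeries.coeff_one, if_neg m.succ_ne_zero]

end HahnSeries

open HahnSeries

/-- `H` encodes `η` and `Hinv` encodes `η⁻¹`; the last conjunct is `θ(η(w)) = w` read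
coefficientwise, the sum being truncated at `k = m` since `Hinv ^ k` has order `k`. -/
theorem eta_is_compositional_inverse_general {A : Type*} [CommRing A] [Algebra ℚ A]
    (Θ : HahnSeries ℤ A)
    (hΘlow : ∀ j < (-1 : ℤ), Θ.coeff j = 0) (hΘ1 : Θ.coeff (-1) = 1) :
    ∃ H : HahnSeries ℤ A,
      (∀ m : ℤ, H.coeff m = etaCoeff Θ m) ∧
      H.coeff (-1) = 1 ∧ (∀ j < (-1 : ℤ), H.coeff j = 0) ∧
      ∃ Hinv : HahnSeries ℤ A, H * Hinv = 1 ∧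
        ∀ m : ℤ,
          (H.coeff m + ∑ k ∈ Finset.Icc (0 : ℤ) m, Θ.coeff k * (Hinv ^ k.toNat).coeff m)
            = if m = -1 then 1 else 0 := by
  set f : A⟦X⟧ := 1 + X * PowerSeries.mk fun k => Θ.coeff k
  have hΘ : Θ = single (-1) 1 * ofPowerSeries ℤ A f := eq_single_neg_one_mul_ofPowerSeries hΘlow hΘ1
  obtain ⟨ψ, hψ⟩ := exists_eq_X_mul_subst (f := f) (by simp [f])
  have hψ0 := constantCoeff_eq_zero_of_eq_X_mul_subst hψ
  have hG : constantCoeff (-lagrangeLog f) = 0 := by simp [constantCoeff_lagrangeLog]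
  set E := (exp A).subst (-lagrangeLog f)
  have hlog : lagrangeLog f
      = PowerSeries.mk fun k => if k = 0 then 0 else (k : ℚ)⁻¹ • (Θ ^ k).coeff 0 := by
    ext k
    rw [hΘ]
    simp only [lagrangeLog, coeff_mk, coeff_zero_pow_single_neg_one_mul_ofPowerSeries]
  refine ⟨single (-1) 1 * ofPowerSeries ℤ A E, fun m => ?_, ?_, fun j hj => ?_,
    ofPowerSeries ℤ A ψ, ?_, coeff_single_neg_one_mul_add_sum_Icc_eq_ite (Θ.coeff ·) hψ0
      (exp_subst_neg_lagrangeLog_add_X_mul_subst hψ)⟩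
  · rw [coeff_single_mul, one_mul, coeff_ofPowerSeries_int, sub_neg_eq_add, etaCoeff, ← hlog,
      coeff_exp_subst hG]
  · simp [coeff_single_mul, coeff_ofPowerSeries_int, E,
      constantCoeff_subst_of_constantCoeff_eq_zero hG]
  · rw [coeff_single_mul, coeff_ofPowerSeries_int, if_neg (by omega), mul_zero]
  · rw [hψ, map_mul, ofPowerSeries_X, mul_mul_mul_comm, single_mul_single, ← map_mul,
      exp_subst_neg_lagrangeLog_mul_subst (by simp [f]) hψ]
    simp

/-- **Proposition (prop:agrees), part (1).** Let `A = ⊕_{k≥0} A_k` be a finitely generated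
commutative graded algebra over `A₀` (a ℂ-algebra that is an integral domain, so in
particular a ℚ-algebra), and let `θ(y) = y + ∑_{k≥0} a_k y^{−k} ∈ A⟦y^{−1}⟧[y]` with
`a_k ∈ A_{k+1}` for all `k ≥ 0`.  Then
`η(w) = w·exp(−∑_{k≥1} (1/k)·([y^0]θ^k)·w^{−k})` is a well-defined element of
`A⟦w^{−1}⟧[w]` of the form `η(w) = w + ∑_{k≥0} b_k w^{−k}`, and it is a compositional
inverse of `θ`: `θ(η(w)) = w`.

Encodings: Laurent series in `y^{−1}` (resp. `w^{−1}`) with finitely many positive powers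
are `HahnSeries ℤ A` in `t = y^{−1}` (resp. `s = w^{−1}`); `θ` is encoded by `Θ` with
`Θ.coeff (−1) = 1`, `Θ.coeff j = 0` for `j < −1` and `Θ.coeff k = a_k ∈ A_{k+1}` for
`k ≥ 0`; `η` is encoded by `H` with coefficients `etaCoeff Θ`.  Its shape reads
`H.coeff (−1) = 1` and `H.coeff j = 0` for `j < −1`; `η` is then invertible (with inverse
`Hinv` of order `1`) and `θ(η(w)) = η + ∑_{k≥0} a_k·η^{−k} = w` reads coefficientwise
`H.coeff m + ∑_{0≤k≤m} Θ.coeff k · (Hinv^k).coeff m = δ_{m,−1}` (the truncation at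
`k = m` being valid since `Hinv^k` has order `k`). -/
theorem eta_is_compositional_inverse {A₀ A : Type*} [CommRing A₀] [CommRing A] [IsDomain A]
    [Algebra A₀ A] [Algebra ℚ A]
    (𝒜 : ℕ → Submodule A₀ A) [GradedAlgebra 𝒜]
    (hfg : (⊤ : Subalgebra A₀ A).FG)
    (Θ : HahnSeries ℤ A)
    (hΘlow : ∀ j < (-1 : ℤ), Θ.coeff j = 0) (hΘ1 : Θ.coeff (-1) = 1)
    (hdeg : ∀ k : ℕ, Θ.coeff (k : ℤ) ∈ 𝒜 (k + 1)) :
    ∃ H : HahnSeries ℤ A,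
      (∀ m : ℤ, H.coeff m = etaCoeff Θ m) ∧
      H.coeff (-1) = 1 ∧ (∀ j < (-1 : ℤ), H.coeff j = 0) ∧
      ∃ Hinv : HahnSeries ℤ A, H * Hinv = 1 ∧
        ∀ m : ℤ,
          (H.coeff m + ∑ k ∈ Finset.Icc (0 : ℤ) m, Θ.coeff k * (Hinv ^ k.toNat).coeff m)
            = if m = -1 then 1 else 0 :=
  eta_is_compositional_inverse_general Θ hΘlow hΘ1
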